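/- Let H be a bialgebra over a commutative ring R and δ_n its Drinfeld maps. Then the maps δ_n are coassociative: for all integers n ≥ 1, ℓ ≥ 1 and 0 ≤ s ≤ n−1, one has (id^{⊗s} ⊗ δ_ℓ ⊗ id^{⊗(n−1−s)}) ∘ δ_n = δ_{n+ℓ−1} as maps H → H^{⊗(n+ℓ−1)}. -/

import Mathlib

open scoped TensorProduct
noncomputable section

universe u
variable (R : Type u) [CommRing R] (H : Type u) [Ring H] [Bialgebra R H]

/-- The `n`-fold tensor power `H^{⊗n}` over `R` (with `H^{⊗0} = R`). -/
def TpowB : ℕ → ModuleCat R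
  | 0 => ModuleCat.of R R
  | n+1 => ModuleCat.of R (H ⊗[R] (TpowB n))

/-- The iterated coproducts `Δ^n : H → H^{⊗n}`, with `Δ^0 := ε`. -/
def DeltaB : (n : ℕ) → (H →ₗ[R] TpowB R H n)
  | 0 => Bialgebra.counitAlgHom R H |>.toLinearMap
  | n+1 => (TensorProduct.map LinearMap.id (DeltaB n)) ∘ₗ Coalgebra.comul

/-- `id - u ∘ ε : H → H`. -/
def projB : H →ₗ[R] H := LinearMap.id - (Algebra.linearMap R H) ∘ₗ Coalgebra.counit

/-- `(id - u∘ε)^{⊗n} : H^{⊗n} → H^{⊗n}`. -/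
def projPowB : (n : ℕ) → (TpowB R H n →ₗ[R] TpowB R H n)
  | 0 => LinearMap.id
  | n+1 => TensorProduct.map (projB R H) (projPowB n)

/-- Drinfeld's maps `δ_n := (id - u∘ε)^{⊗n} ∘ Δ^n : H → H^{⊗n}` (`δ_0 = ε`). -/
def deltaB (n : ℕ) : H →ₗ[R] TpowB R H n := projPowB R H n ∘ₗ DeltaB R H n

/-- Concatenation `H^{⊗m} ⊗ H^{⊗n} → H^{⊗(n+m)}` (first the `m` factors, then the `n`). -/
def concatB : (m : ℕ) → (n : ℕ) → ((TpowB R H m ⊗[R] TpowB R H n) →ₗ[R] TpowB R H (n + m))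
  | 0, n => (TensorProduct.lid R (TpowB R H n)).toLinearMap
  | m+1, n => (LinearMap.lTensor H (concatB m n)) ∘ₗ
      (TensorProduct.assoc R H (TpowB R H m) (TpowB R H n)).toLinearMap

/-- `δ_ℓ ⊗ id^{⊗t} : H^{⊗(1+t)} → H^{⊗(ℓ+t)}`, i.e. `δ_ℓ` applied in the first slot. -/
def deltaMidB (ℓ t : ℕ) : TpowB R H (t + 1) →ₗ[R] TpowB R H (t + ℓ) :=
  (concatB R H ℓ t) ∘ₗ (TensorProduct.map (deltaB R H ℓ) LinearMap.id :
    (H ⊗[R] TpowB R H t) →ₗ[R] (TpowB R H ℓ ⊗[R] TpowB R H t))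

/-- Prepend `s` identity tensor factors on the left: `id^{⊗s} ⊗ f`. -/
def extendB : (s : ℕ) → {a b : ℕ} →
    ((TpowB R H a →ₗ[R] TpowB R H b) → (TpowB R H (a + s) →ₗ[R] TpowB R H (b + s)))
  | 0, _, _, f => f
  | s+1, _, _, f => LinearMap.lTensor H (extendB s f)

/-- Recursion for Drinfeld's maps. -/
lemma deltaB_succ (n : ℕ) :
    deltaB R H (n+1) =
      (TensorProduct.map (projB R H) (deltaB R H n)) ∘ₗ Coalgebra.comul := by
  show (TensorProduct.map (projB R H) (projPowB R H n)) ∘ₗ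
      ((TensorProduct.map LinearMap.id (DeltaB R H n)) ∘ₗ Coalgebra.comul) = _
  rw [← LinearMap.comp_assoc, ← TensorProduct.map_comp, LinearMap.comp_id, deltaB]

lemma projB_one : projB R H 1 = 0 := by
  simp [projB]

lemma deltaB_one (n : ℕ) : deltaB R H (n+1) 1 = 0 := by
  rw [deltaB_succ]
  show TensorProduct.map (projB R H) (deltaB R H n) (Coalgebra.comul 1) = 0
  rw [Bialgebra.comul_one, Algebra.TensorProduct.one_def]
  show projB R H 1 ⊗ₜ[R] deltaB R H n 1 = 0
  rw [projB_one]
  simp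

lemma deltaB_comp_projB (n : ℕ) :
    deltaB R H (n+1) ∘ₗ projB R H = deltaB R H (n+1) := by
  rw [projB, LinearMap.comp_sub, LinearMap.comp_id]
  have h : deltaB R H (n+1) ∘ₗ ((Algebra.linearMap R H) ∘ₗ (Coalgebra.counit : H →ₗ[R] R)) = 0 := by
    apply LinearMap.ext
    intro x
    show deltaB R H (n+1) (algebraMap R H (Coalgebra.counit x)) = 0
    rw [Algebra.algebraMap_eq_smul_one, map_smul, deltaB_one, smul_zero]
  rw [h, sub_zero]

/-- naturality of `lid`. -/
lemma lid_natural {M N : Type u} [AddCommGroup M] [AddCommGroup N] [Module R M] [Module R N]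
    (f : M →ₗ[R] N) :
    (TensorProduct.lid R N).toLinearMap ∘ₗ TensorProduct.map (LinearMap.id : R →ₗ[R] R) f
      = f ∘ₗ (TensorProduct.lid R M).toLinearMap := by
  apply TensorProduct.ext'
  intro r m
  simp

/-- Key lemma: concatenation of Drinfeld maps after comultiplication. -/
lemma deltaB_concat (ℓ t : ℕ) :
    concatB R H ℓ t ∘ₗ (TensorProduct.map (deltaB R H ℓ) (deltaB R H t)) ∘ₗ
      (Coalgebra.comul : H →ₗ[R] H ⊗[R] H) = deltaB R H (t + ℓ) := by
  induction ℓ with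
  | zero =>
    have h1 : (TensorProduct.map (deltaB R H 0) (deltaB R H t) :
        H ⊗[R] H →ₗ[R] TpowB R H 0 ⊗[R] TpowB R H t) =
        TensorProduct.map LinearMap.id (deltaB R H t) ∘ₗ
          LinearMap.rTensor H (Coalgebra.counit : H →ₗ[R] R) := by
      rw [LinearMap.rTensor, ← TensorProduct.map_comp, LinearMap.id_comp, LinearMap.comp_id]
      rfl
    rw [h1]
    show (TensorProduct.lid R (TpowB R H t)).toLinearMap ∘ₗ
      (TensorProduct.map LinearMap.id (deltaB R H t) ∘ₗ
        (LinearMap.rTensor H (Coalgebra.counit : H →ₗ[R] R) ∘ₗ Coalgebra.comul)) = _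
    rw [Coalgebra.rTensor_counit_comp_comul]
    show (TensorProduct.lid R (TpowB R H t)).toLinearMap ∘ₗ
      (TensorProduct.map LinearMap.id (deltaB R H t) ∘ₗ TensorProduct.mk R R H 1) = _
    rw [← LinearMap.comp_assoc, lid_natural]
    apply LinearMap.ext
    intro x
    simp
  | succ m ih =>
    have h1 : (TensorProduct.map (deltaB R H (m+1)) (deltaB R H t) :
        H ⊗[R] H →ₗ[R] TpowB R H (m+1) ⊗[R] TpowB R H t) =
        TensorProduct.map (TensorProduct.map (projB R H) (deltaB R H m)) (deltaB R H t) ∘ₗ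
          TensorProduct.map (Coalgebra.comul : H →ₗ[R] H ⊗[R] H) LinearMap.id := by
      rw [← TensorProduct.map_comp, LinearMap.comp_id, ← deltaB_succ]
      rfl
    rw [h1]
    show (LinearMap.lTensor H (concatB R H m t) ∘ₗ
        (TensorProduct.assoc R H (TpowB R H m) (TpowB R H t)).toLinearMap) ∘ₗ
        (TensorProduct.map (TensorProduct.map (projB R H) (deltaB R H m)) (deltaB R H t) ∘ₗ
          TensorProduct.map (Coalgebra.comul : H →ₗ[R] H ⊗[R] H) LinearMap.id) ∘ₗ
        Coalgebra.comul = _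
    have h2 : (TensorProduct.assoc R H (TpowB R H m) (TpowB R H t)).toLinearMap ∘ₗ
        TensorProduct.map (TensorProduct.map (projB R H) (deltaB R H m)) (deltaB R H t) =
        TensorProduct.map (projB R H) (TensorProduct.map (deltaB R H m) (deltaB R H t)) ∘ₗ
          (TensorProduct.assoc R H H H).toLinearMap := by
      exact (TensorProduct.map_map_comp_assoc_eq _ _ _).symm
    have h3 : (TensorProduct.assoc R H H H).toLinearMap ∘ₗ
        (TensorProduct.map (Coalgebra.comul : H →ₗ[R] H ⊗[R] H) LinearMap.id) ∘ₗ
        (Coalgebra.comul : H →ₗ[R] H ⊗[R] H) =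
        LinearMap.lTensor H (Coalgebra.comul : H →ₗ[R] H ⊗[R] H) ∘ₗ Coalgebra.comul := by
      have := Coalgebra.coassoc (R := R) (A := H)
      rw [← this]
      rfl
    calc (LinearMap.lTensor H (concatB R H m t) ∘ₗ
          (TensorProduct.assoc R H (TpowB R H m) (TpowB R H t)).toLinearMap) ∘ₗ
          (TensorProduct.map (TensorProduct.map (projB R H) (deltaB R H m)) (deltaB R H t) ∘ₗ
          TensorProduct.map (Coalgebra.comul : H →ₗ[R] H ⊗[R] H) LinearMap.id) ∘ₗ
          Coalgebra.comul
        = LinearMap.lTensor H (concatB R H m t) ∘ₗ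
          ((TensorProduct.assoc R H (TpowB R H m) (TpowB R H t)).toLinearMap ∘ₗ
          TensorProduct.map (TensorProduct.map (projB R H) (deltaB R H m)) (deltaB R H t)) ∘ₗ
          TensorProduct.map (Coalgebra.comul : H →ₗ[R] H ⊗[R] H) LinearMap.id ∘ₗ
          Coalgebra.comul := by
            simp only [LinearMap.comp_assoc]
      _ = LinearMap.lTensor H (concatB R H m t) ∘ₗ
          (TensorProduct.map (projB R H) (TensorProduct.map (deltaB R H m) (deltaB R H t))) ∘ₗ
          ((TensorProduct.assoc R H H H).toLinearMap ∘ₗ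
          TensorProduct.map (Coalgebra.comul : H →ₗ[R] H ⊗[R] H) LinearMap.id ∘ₗ
          Coalgebra.comul) := by
            rw [h2]; simp only [LinearMap.comp_assoc]
      _ = LinearMap.lTensor H (concatB R H m t) ∘ₗ
          (TensorProduct.map (projB R H) (TensorProduct.map (deltaB R H m) (deltaB R H t))) ∘ₗ
          (LinearMap.lTensor H (Coalgebra.comul : H →ₗ[R] H ⊗[R] H) ∘ₗ Coalgebra.comul) := by
            rw [h3]
      _ = (TensorProduct.map (projB R H)
            (concatB R H m t ∘ₗ (TensorProduct.map (deltaB R H m) (deltaB R H t)) ∘ₗ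
              Coalgebra.comul)) ∘ₗ Coalgebra.comul := by
            simp only [LinearMap.lTensor, ← LinearMap.comp_assoc, ← TensorProduct.map_comp,
              LinearMap.id_comp, LinearMap.comp_id]
      _ = (TensorProduct.map (projB R H) (deltaB R H (t + m))) ∘ₗ Coalgebra.comul := by
            rw [ih]
      _ = (show H →ₗ[R] H ⊗[R] TpowB R H (t + m) from deltaB R H (t + (m + 1))) :=
          (deltaB_succ R H (t + m)).symm

/-- Coassociativity of Drinfeld's maps: writing `n = s + 1 + t`
(so that `0 ≤ s ≤ n - 1` and `t = n - 1 - s`), for all `ℓ ≥ 1` one has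
`(id^{⊗s} ⊗ δ_ℓ ⊗ id^{⊗(n-1-s)}) ∘ δ_n = δ_{n+ℓ-1}` as maps `H → H^{⊗(n+ℓ-1)}`. -/
theorem stmt9 (ℓ s t : ℕ) (hℓ : 1 ≤ ℓ) :
    (extendB R H s (deltaMidB R H ℓ t)) ∘ₗ deltaB R H (t + 1 + s) = deltaB R H (t + ℓ + s) := by
  induction s with
  | zero =>
    show deltaMidB R H ℓ t ∘ₗ deltaB R H (t + 1) = deltaB R H (t + ℓ)
    obtain ⟨m, rfl⟩ : ∃ m, ℓ = m + 1 := ⟨ℓ - 1, by omega⟩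
    rw [deltaMidB, deltaB_succ R H t]
    have h1 : (TensorProduct.map (deltaB R H (m+1)) LinearMap.id :
          H ⊗[R] TpowB R H t →ₗ[R] TpowB R H (m+1) ⊗[R] TpowB R H t) ∘ₗ
        TensorProduct.map (projB R H) (deltaB R H t) =
        TensorProduct.map (deltaB R H (m+1)) (deltaB R H t) := by
      rw [← TensorProduct.map_comp, deltaB_comp_projB, LinearMap.id_comp]
    calc (concatB R H (m+1) t ∘ₗ TensorProduct.map (deltaB R H (m+1)) LinearMap.id) ∘ₗ
          (TensorProduct.map (projB R H) (deltaB R H t) ∘ₗ Coalgebra.comul)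
        = concatB R H (m+1) t ∘ₗ (TensorProduct.map (deltaB R H (m+1)) LinearMap.id ∘ₗ
            TensorProduct.map (projB R H) (deltaB R H t)) ∘ₗ Coalgebra.comul := by
          simp only [LinearMap.comp_assoc]
      _ = concatB R H (m+1) t ∘ₗ TensorProduct.map (deltaB R H (m+1)) (deltaB R H t) ∘ₗ
            Coalgebra.comul := by rw [h1]
      _ = deltaB R H (t + (m+1)) := deltaB_concat R H (m+1) t
  | succ s ih =>
    show LinearMap.lTensor H (extendB R H s (deltaMidB R H ℓ t)) ∘ₗ
        deltaB R H ((t + 1 + s) + 1) = deltaB R H ((t + ℓ + s) + 1)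
    rw [deltaB_succ R H (t + 1 + s), deltaB_succ R H (t + ℓ + s), ← LinearMap.comp_assoc,
      LinearMap.lTensor, ← TensorProduct.map_comp, LinearMap.id_comp, ih]
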